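/- Let p ≥ 1, d ≥ 1, K ≥ 2, and let μ_2, …, μ_K be probability measures on ℝ^d with finite p-th moments. Then, taking the infimum over all probability measures μ_1 on ℝ^d with finite p-th moment, inf_{μ_1} SF(μ_1; μ_{2:K}) ≤ inf_{μ_1} SMW_p^p(μ_1, μ_2, …, μ_K; c), where SF(μ_1; μ_{2:K}) := max_{2≤k≤K} SW_p^p(μ_1, μ_k): the optimal value of the s-MFSWB objective is a lower bound for the optimal value of the sliced multi-marginal Wasserstein cost with the maximal ground metric, minimized over the first marginal. -/

import Mathlib

open MeasureTheory Metric Real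

noncomputable section

/-- `ℝ^d`. -/
abbrev Rd (d : ℕ) := EuclideanSpace ℝ (Fin d)

/-- The uniform probability measure `σ` on the unit sphere `S^{d-1} ⊂ ℝ^d`,
obtained by normalizing the surface measure coming from the Lebesgue measure. -/
noncomputable def uniformSphere (d : ℕ) :
    Measure (sphere (0 : Rd d) 1) :=
  ((volume : Measure (Rd d)).toSphere Set.univ)⁻¹ • (volume : Measure (Rd d)).toSphere

/-- A measure on `ℝ^d` has finite `p`-th moment. -/
def FiniteMoment {d : ℕ} (p : ℝ) (μ : Measure (Rd d)) : Prop :=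
  Integrable (fun x => ‖x‖ ^ p) μ

/-- A measure on `ℝ` has finite `p`-th moment. -/
def FiniteMoment1 (p : ℝ) (ν : Measure ℝ) : Prop :=
  Integrable (fun x => |x| ^ p) ν

/-- Pushforward `θ♯μ` of `μ` under `x ↦ ⟪θ, x⟫`. -/
def proj {d : ℕ} (θ : sphere (0 : Rd d) 1) (μ : Measure (Rd d)) : Measure ℝ :=
  μ.map (fun x => inner ℝ (θ : Rd d) x)

/-- The set of couplings of two measures on `ℝ`. -/
def Coupling (ν₁ ν₂ : Measure ℝ) : Set (Measure (ℝ × ℝ)) :=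
  {γ | IsProbabilityMeasure γ ∧ γ.map Prod.fst = ν₁ ∧ γ.map Prod.snd = ν₂}

/-- One-dimensional `p`-Wasserstein cost `W_p^p`. -/
def Wpp (p : ℝ) (ν₁ ν₂ : Measure ℝ) : ℝ :=
  sInf ((fun γ : Measure (ℝ × ℝ) => ∫ q, |q.1 - q.2| ^ p ∂γ) '' Coupling ν₁ ν₂)

/-- Sliced `p`-Wasserstein cost `SW_p^p`. -/
def SWpp {d : ℕ} (p : ℝ) (μ₁ μ₂ : Measure (Rd d)) : ℝ :=
  ∫ θ, Wpp p (proj θ μ₁) (proj θ μ₂) ∂(uniformSphere d)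

/-- The set of multi-marginal couplings of `K` measures on `ℝ^d`. -/
def MCoupling {d K : ℕ} (μs : Fin K → Measure (Rd d)) : Set (Measure (Fin K → Rd d)) :=
  {pl | IsProbabilityMeasure pl ∧ ∀ k, pl.map (fun x => x k) = μs k}

/-- The inner multi-marginal transport cost along direction `θ`, with the maximal
ground metric `c(t₁,…,t_K) = max_{i,j} |t_i - t_j|`. -/
def SMWtheta {d K : ℕ} (p : ℝ) (μs : Fin K → Measure (Rd d))
    (θ : sphere (0 : Rd d) 1) : ℝ :=
  sInf ((fun pl : Measure (Fin K → Rd d) =>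
      ∫ x, (⨆ i, ⨆ j, |inner ℝ (θ : Rd d) (x i) - inner ℝ (θ : Rd d) (x j)|) ^ p ∂pl)
    '' MCoupling μs)

/-- Sliced multi-marginal Wasserstein cost `SMW_p^p` with the maximal ground metric. -/
def SMWpp {d K : ℕ} (p : ℝ) (μs : Fin K → Measure (Rd d)) : ℝ :=
  ∫ θ, SMWtheta p μs θ ∂(uniformSphere d)

/-! Projecting a multi-marginal coupling `π` of `(μ₁, …, μ_K)` onto its first and `k`-th
coordinates along `θ` gives a coupling of `θ♯μ₁` and `θ♯μ_k` whose cost `|t₁ - t_k|^p` is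
dominated by the maximal ground cost, so `W_p^p(θ♯μ₁, θ♯μ_k)` is at most the inner
multi-marginal cost at `θ`; integrating over `θ` gives `SW_p^p(μ₁, μ_k) ≤ SMW_p^p` for every `k`.
The analytic work is to make the right-hand integral meaningful: the inner cost is an infimum of
functions of `θ` that are continuous by dominated convergence (finite `p`-th moments), hence upper
semicontinuous and measurable, and it is bounded by the cost of the product coupling. -/

/-- The maximal ground metric `c(t) = max_{i,j} |t_i - t_j|`. -/
def spread {ι : Type*} (t : ι → ℝ) : ℝ := ⨆ i, ⨆ j, |t i - t j|

section Spread

variable {ι : Type*}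

lemma spread_nonneg (t : ι → ℝ) : 0 ≤ spread t :=
  Real.iSup_nonneg fun _ => Real.iSup_nonneg fun _ => abs_nonneg _

lemma abs_sub_le_spread [Finite ι] (t : ι → ℝ) (i j : ι) : |t i - t j| ≤ spread t :=
  (le_ciSup (f := fun j => |t i - t j|) (Set.finite_range _).bddAbove j).trans
    (le_ciSup (f := fun i => ⨆ j, |t i - t j|) (Set.finite_range _).bddAbove i)

lemma spread_le {t : ι → ℝ} {c : ℝ} (h : ∀ i j, |t i - t j| ≤ c) (hc : 0 ≤ c) :
    spread t ≤ c :=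
  Real.iSup_le (fun i => Real.iSup_le (h i) hc) hc

lemma continuous_spread [Fintype ι] [Nonempty ι] : Continuous (spread : (ι → ℝ) → ℝ) := by
  have sup'_eq (t : ι → ℝ) : spread t = Finset.univ.sup' Finset.univ_nonempty
      fun i => Finset.univ.sup' Finset.univ_nonempty fun j => |t i - t j| := by
    simp only [spread, Finset.sup'_univ_eq_ciSup]
  rw [funext sup'_eq]
  exact Continuous.finset_sup'_apply _ fun i _ => Continuous.finset_sup'_apply _ fun j _ =>
    ((continuous_apply i).sub (continuous_apply j)).abs

lemma spread_inner_rpow_le {E : Type*} [NormedAddCommGroup E] [InnerProductSpace ℝ E]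
    [Fintype ι] [Nonempty ι] {p : ℝ} (hp : 0 ≤ p) {θ : E} (hθ : ‖θ‖ ≤ 1) (x : ι → E) :
    spread (fun i => inner ℝ θ (x i)) ^ p ≤ 2 ^ p * ∑ i, ‖x i‖ ^ p := by
  obtain ⟨i₀, hi₀⟩ := Finite.exists_max fun i => ‖x i‖
  have inner_le : ∀ y, |inner ℝ θ y| ≤ ‖y‖ := fun y =>
    (abs_real_inner_le_norm θ y).trans (mul_le_of_le_one_left (norm_nonneg y) hθ)
  have spread_le_two_mul : spread (fun i => inner ℝ θ (x i)) ≤ 2 * ‖x i₀‖ := by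
    refine spread_le (fun i j => ?_) (by positivity)
    linarith [(abs_sub _ _).trans (add_le_add (inner_le (x i)) (inner_le (x j))), hi₀ i, hi₀ j]
  calc spread (fun i => inner ℝ θ (x i)) ^ p ≤ (2 * ‖x i₀‖) ^ p :=
        rpow_le_rpow (spread_nonneg _) spread_le_two_mul hp
    _ = 2 ^ p * ‖x i₀‖ ^ p := mul_rpow zero_le_two (norm_nonneg _)
    _ ≤ 2 ^ p * ∑ i, ‖x i‖ ^ p := by
        gcongr
        exact Finset.single_le_sum (f := fun i => ‖x i‖ ^ p) (fun i _ => by positivity)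
          (Finset.mem_univ i₀)

end Spread

instance (d : ℕ) : IsFiniteMeasure (uniformSphere d) := by
  constructor
  rw [uniformSphere, Measure.smul_apply, smul_eq_mul]
  set m := (volume : Measure (Rd d)).toSphere Set.univ
  rcases eq_or_ne m 0 with h0 | h0
  · simp [h0]
  rcases eq_or_ne m ⊤ with h1 | h1
  · simp [h1]
  · simp [ENNReal.inv_mul_cancel h0 h1]

lemma Real.sInf_image_le_sInf_image {α : Type*} {s : Set α} {f g : α → ℝ}
    (hf : BddBelow (f '' s)) (hfg : ∀ x ∈ s, f x ≤ g x) : sInf (f '' s) ≤ sInf (g '' s) := by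
  rcases s.eq_empty_or_nonempty with rfl | hs
  · simp
  refine le_csInf (hs.image g) ?_
  rintro _ ⟨x, hx, rfl⟩
  exact (csInf_le hf ⟨x, hx, rfl⟩).trans (hfg x hx)

section Wasserstein

variable {p : ℝ} {ν₁ ν₂ : Measure ℝ}

lemma integral_abs_sub_rpow_nonneg (p : ℝ) (γ : Measure (ℝ × ℝ)) :
    0 ≤ ∫ q, |q.1 - q.2| ^ p ∂γ :=
  integral_nonneg fun _ => rpow_nonneg (abs_nonneg _) p

lemma Wpp_nonneg : 0 ≤ Wpp p ν₁ ν₂ :=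
  Real.sInf_nonneg (by rintro _ ⟨γ, -, rfl⟩; exact integral_abs_sub_rpow_nonneg p γ)

lemma Wpp_le_integral {γ : Measure (ℝ × ℝ)} (hγ : γ ∈ Coupling ν₁ ν₂) :
    Wpp p ν₁ ν₂ ≤ ∫ q, |q.1 - q.2| ^ p ∂γ :=
  csInf_le ⟨0, by rintro _ ⟨γ, -, rfl⟩; exact integral_abs_sub_rpow_nonneg p γ⟩ ⟨γ, hγ, rfl⟩

lemma SWpp_nonneg {d : ℕ} (μ₁ μ₂ : Measure (Rd d)) : 0 ≤ SWpp p μ₁ μ₂ :=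
  integral_nonneg fun _ => Wpp_nonneg

end Wasserstein

def maxCost {d K : ℕ} (p : ℝ) (θ : Rd d) (x : Fin K → Rd d) : ℝ :=
  spread (fun i => inner ℝ θ (x i)) ^ p

section MultiMarginal

variable {d K : ℕ} {p : ℝ} {μs : Fin K → Measure (Rd d)} {pl : Measure (Fin K → Rd d)}

lemma SMWtheta_eq (θ : sphere (0 : Rd d) 1) :
    SMWtheta p μs θ = sInf ((fun pl => ∫ x, maxCost p θ x ∂pl) '' MCoupling μs) :=
  rfl

lemma maxCost_nonneg (θ : Rd d) (x : Fin K → Rd d) : 0 ≤ maxCost p θ x :=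
  rpow_nonneg (spread_nonneg _) p

lemma maxCost_le [NeZero K] (hp : 0 ≤ p) (θ : sphere (0 : Rd d) 1) (x : Fin K → Rd d) :
    maxCost p θ x ≤ 2 ^ p * ∑ i, ‖x i‖ ^ p :=
  spread_inner_rpow_le hp (mem_sphere_zero_iff_norm.mp θ.2).le x

lemma continuous_maxCost [NeZero K] (hp : 0 ≤ p) :
    Continuous fun q : Rd d × (Fin K → Rd d) => maxCost p q.1 q.2 :=
  (continuous_spread.comp (continuous_pi fun i =>
    continuous_fst.inner ((continuous_apply i).comp continuous_snd))).rpow_const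
    fun _ => Or.inr hp

lemma integrable_norm_eval_rpow (hμm : ∀ k, FiniteMoment p (μs k)) (hpl : pl ∈ MCoupling μs)
    (k : Fin K) : Integrable (fun x => ‖x k‖ ^ p) pl := by
  have h : Integrable (fun y : Rd d => ‖y‖ ^ p) (pl.map fun x => x k) := hpl.2 k ▸ hμm k
  exact (integrable_map_measure h.aestronglyMeasurable (measurable_pi_apply k).aemeasurable).mp h

lemma integrable_maxCost_bound (hμm : ∀ k, FiniteMoment p (μs k)) (hpl : pl ∈ MCoupling μs) :
    Integrable (fun x => 2 ^ p * ∑ i, ‖x i‖ ^ p) pl :=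
  (integrable_finsetSum _ fun i _ => integrable_norm_eval_rpow hμm hpl i).const_mul _

lemma integrable_maxCost [NeZero K] (hp : 0 ≤ p) (hμm : ∀ k, FiniteMoment p (μs k))
    (hpl : pl ∈ MCoupling μs) (θ : sphere (0 : Rd d) 1) : Integrable (maxCost p θ) pl :=
  (integrable_maxCost_bound hμm hpl).mono'
    ((continuous_maxCost hp).comp (Continuous.prodMk_right (θ : Rd d))).aestronglyMeasurable
    (ae_of_all _ fun x => by
      rw [norm_of_nonneg (maxCost_nonneg _ x)]; exact maxCost_le hp θ x)

lemma continuous_integral_maxCost [NeZero K] (hp : 0 ≤ p) (hμm : ∀ k, FiniteMoment p (μs k))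
    (hpl : pl ∈ MCoupling μs) :
    Continuous fun θ : sphere (0 : Rd d) 1 => ∫ x, maxCost p θ x ∂pl := by
  refine continuous_of_dominated (fun θ => (integrable_maxCost hp hμm hpl θ).aestronglyMeasurable)
    (fun θ => ae_of_all _ fun x => ?_) (integrable_maxCost_bound hμm hpl) (ae_of_all _ fun x => ?_)
  · rw [norm_of_nonneg (maxCost_nonneg _ x)]
    exact maxCost_le hp θ x
  · have h : Continuous fun θ : sphere (0 : Rd d) 1 => ((θ : Rd d), x) := by fun_prop
    exact ((continuous_maxCost (d := d) (K := K) hp).comp h :)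

lemma bddBelow_integral_maxCost (θ : Rd d) :
    BddBelow ((fun pl => ∫ x, maxCost p θ x ∂pl) '' MCoupling μs) :=
  ⟨0, by rintro _ ⟨pl, -, rfl⟩; exact integral_nonneg (maxCost_nonneg θ)⟩

lemma SMWtheta_nonneg (θ : sphere (0 : Rd d) 1) : 0 ≤ SMWtheta p μs θ :=
  Real.sInf_nonneg (by rintro _ ⟨pl, -, rfl⟩; exact integral_nonneg (maxCost_nonneg _))

lemma SMWtheta_le_integral (hpl : pl ∈ MCoupling μs) (θ : sphere (0 : Rd d) 1) :
    SMWtheta p μs θ ≤ ∫ x, maxCost p θ x ∂pl :=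
  csInf_le (bddBelow_integral_maxCost _) ⟨pl, hpl, rfl⟩

lemma SMWpp_nonneg : 0 ≤ SMWpp p μs :=
  integral_nonneg SMWtheta_nonneg

lemma pi_mem_MCoupling [∀ k, IsProbabilityMeasure (μs k)] : Measure.pi μs ∈ MCoupling μs :=
  ⟨inferInstance, fun k => by
    rw [show (fun x : Fin K → Rd d => x k) = Function.eval k from rfl, Measure.pi_map_eval]
    simp⟩

lemma upperSemicontinuous_SMWtheta [NeZero K] (hp : 0 ≤ p) (hμm : ∀ k, FiniteMoment p (μs k)) :
    UpperSemicontinuous (SMWtheta p μs) := by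
  simp only [funext SMWtheta_eq, sInf_image']
  exact upperSemicontinuous_ciInf
    (fun _ => ⟨0, by rintro _ ⟨pl, rfl⟩; exact integral_nonneg (maxCost_nonneg _)⟩)
    fun pl => (continuous_integral_maxCost hp hμm pl.2).upperSemicontinuous

lemma integrable_SMWtheta [NeZero K] [∀ k, IsProbabilityMeasure (μs k)] (hp : 0 ≤ p)
    (hμm : ∀ k, FiniteMoment p (μs k)) : Integrable (SMWtheta p μs) (uniformSphere d) := by
  refine Integrable.of_bound (upperSemicontinuous_SMWtheta hp hμm).measurable.aestronglyMeasurable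
    (∫ x, 2 ^ p * ∑ i, ‖x i‖ ^ p ∂(Measure.pi μs)) (ae_of_all _ fun θ => ?_)
  rw [norm_of_nonneg (SMWtheta_nonneg θ)]
  exact (SMWtheta_le_integral pi_mem_MCoupling θ).trans <| integral_mono
    (integrable_maxCost hp hμm pi_mem_MCoupling θ) (integrable_maxCost_bound hμm pi_mem_MCoupling)
    (maxCost_le hp θ)

lemma map_inner_mem_Coupling (hpl : pl ∈ MCoupling μs) (θ : sphere (0 : Rd d) 1) (i j : Fin K) :
    pl.map (fun x => (inner ℝ (θ : Rd d) (x i), inner ℝ (θ : Rd d) (x j))) ∈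
      Coupling (proj θ (μs i)) (proj θ (μs j)) := by
  have := hpl.1
  have h_inner : Measurable fun y : Rd d => inner ℝ (θ : Rd d) y := by fun_prop
  refine ⟨Measure.isProbabilityMeasure_map (by fun_prop), ?_, ?_⟩
  · rw [Measure.map_map measurable_fst (by fun_prop), proj, ← hpl.2 i,
      Measure.map_map h_inner (measurable_pi_apply i)]
    rfl
  · rw [Measure.map_map measurable_snd (by fun_prop), proj, ← hpl.2 j,
      Measure.map_map h_inner (measurable_pi_apply j)]
    rfl

lemma Wpp_proj_le_SMWtheta [NeZero K] [∀ k, IsProbabilityMeasure (μs k)] (hp : 0 ≤ p)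
    (hμm : ∀ k, FiniteMoment p (μs k)) (θ : sphere (0 : Rd d) 1) (i j : Fin K) :
    Wpp p (proj θ (μs i)) (proj θ (μs j)) ≤ SMWtheta p μs θ := by
  refine le_csInf ⟨_, Measure.pi μs, pi_mem_MCoupling, rfl⟩ ?_
  rintro _ ⟨pl, hpl, rfl⟩
  calc Wpp p (proj θ (μs i)) (proj θ (μs j))
      ≤ ∫ x, |inner ℝ (θ : Rd d) (x i) - inner ℝ (θ : Rd d) (x j)| ^ p ∂pl := by
        refine (Wpp_le_integral (map_inner_mem_Coupling hpl θ i j)).trans_eq ?_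
        exact integral_map (by fun_prop) (by fun_prop)
    _ ≤ ∫ x, maxCost p θ x ∂pl :=
        integral_mono_of_nonneg (ae_of_all _ fun _ => rpow_nonneg (abs_nonneg _) p)
          (integrable_maxCost hp hμm hpl θ) (ae_of_all _ fun x => rpow_le_rpow (abs_nonneg _)
            (abs_sub_le_spread (fun k => inner ℝ (θ : Rd d) (x k)) i j) hp)

lemma SWpp_le_SMWpp [∀ k, IsProbabilityMeasure (μs k)] (hp : 0 ≤ p)
    (hμm : ∀ k, FiniteMoment p (μs k)) (i j : Fin K) : SWpp p (μs i) (μs j) ≤ SMWpp p μs :=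
  have : NeZero K := .of_pos i.pos
  integral_mono_of_nonneg (ae_of_all _ fun _ => Wpp_nonneg) (integrable_SMWtheta hp hμm)
    (ae_of_all _ fun θ => Wpp_proj_le_SMWtheta hp hμm θ i j)

end MultiMarginal

/-- `μs` lists the marginals `μ_2, …, μ_{K+1}` of the paper. -/
theorem sf_inf_le_smw_inf_general (p : ℝ) (hp : 1 ≤ p) (d : ℕ)
    (K : ℕ) (μs : Fin K → Measure (Rd d))
    (hμs : ∀ k, IsProbabilityMeasure (μs k)) (hμsm : ∀ k, FiniteMoment p (μs k)) :
    sInf ((fun μ₁ : Measure (Rd d) => ⨆ k, SWpp p μ₁ (μs k)) ''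
      {μ₁ | IsProbabilityMeasure μ₁ ∧ FiniteMoment p μ₁}) ≤
    sInf ((fun μ₁ : Measure (Rd d) => SMWpp p (Fin.cons μ₁ μs)) ''
      {μ₁ | IsProbabilityMeasure μ₁ ∧ FiniteMoment p μ₁}) := by
  refine Real.sInf_image_le_sInf_image ⟨0, ?_⟩ fun μ₁ ⟨hμ₁, hμ₁m⟩ => ?_
  · rintro _ ⟨μ₁, -, rfl⟩
    exact Real.iSup_nonneg fun k => SWpp_nonneg μ₁ (μs k)
  · have : ∀ i, IsProbabilityMeasure ((Fin.cons μ₁ μs : Fin (K + 1) → Measure (Rd d)) i) :=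
      fun i => Fin.cases hμ₁ hμs i
    have hm : ∀ i, FiniteMoment p ((Fin.cons μ₁ μs : Fin (K + 1) → Measure (Rd d)) i) :=
      fun i => Fin.cases hμ₁m hμsm i
    exact Real.iSup_le (fun k => SWpp_le_SMWpp (by linarith) hm 0 k.succ) SMWpp_nonneg

/-- **Corollary.** Minimizing the s-MFSWB objective `SF(μ₁; μ_{2:K+1}) =
max_k SW_p^p(μ₁, μ_k)` over the barycenter is minimizing a lower bound of the
sliced multi-marginal Wasserstein cost with the maximal ground metric:
`inf_{μ₁} SF(μ₁; μ_{2:K+1}) ≤ inf_{μ₁} SMW_p^p(μ₁, μ_2, …, μ_{K+1}; c)`,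
the infima ranging over probability measures `μ₁` with finite `p`-th moment.
Here `μs : Fin K → Measure (Rd d)` lists the marginals `μ_2, …, μ_{K+1}` (`K ≥ 1`). -/
theorem sf_inf_le_smw_inf (p : ℝ) (hp : 1 ≤ p) (d : ℕ) (hd : 1 ≤ d)
    (K : ℕ) (hK : 1 ≤ K) (μs : Fin K → Measure (Rd d))
    (hμs : ∀ k, IsProbabilityMeasure (μs k)) (hμsm : ∀ k, FiniteMoment p (μs k)) :
    sInf ((fun μ₁ : Measure (Rd d) => ⨆ k, SWpp p μ₁ (μs k)) ''
      {μ₁ | IsProbabilityMeasure μ₁ ∧ FiniteMoment p μ₁}) ≤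
    sInf ((fun μ₁ : Measure (Rd d) => SMWpp p (Fin.cons μ₁ μs)) ''
      {μ₁ | IsProbabilityMeasure μ₁ ∧ FiniteMoment p μ₁}) :=
  sf_inf_le_smw_inf_general p hp d K μs hμs hμsm
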